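/- arXiv:2503.10552 — 2 statements merged into one kernel-verified Lean document; each statement's English description precedes it below -/
import Mathlib

section
/- Consider the semi-implicit scheme for curve evolution: for i=1,…,n, x_{i-1}^{m+1}(−δ_i/h_i − b⁻/2) + x_{i+1}^{m+1}(−δ_i/h_{i+1} − b⁺/2) + x_i^{m+1}((h_i+h_{i+1})/(2τ) + δ_i/h_i + δ_i/h_{i+1} + b⁻/2 + b⁺/2) = RHS_i, where δ_i > 0, h_i, h_{i+1} > 0, τ > 0, b⁻ = max(−α_i,0) ≥ 0, b⁺ = max(α_i,0) ≥ 0. Then the system matrix is tridiagonal and strictly diagonally dominant, hence invertible, for every time step τ > 0. -/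
/-!
Row `i` of the matrix has the form `(-a, d + a + b, -b)` with `a, b ≥ 0` (diffusion plus upwinded
advection) and `d = (h_i + h_{i+1}) / (2τ) > 0` (the mass term), so the off-diagonal entries of a row
add up in absolute value to at most `a + b < |d + a + b|`. Strict diagonal dominance makes the
determinant nonzero by Gershgorin's theorem.
-/

open Finset

theorem sum_ite_le_of_subsingleton {ι M : Type*} [Fintype ι] [AddCommMonoid M] [PartialOrder M]
    [IsOrderedAddMonoid M] (P : ι → Prop) [DecidablePred P] {c : M} (hc : 0 ≤ c)
    (hP : ∀ a b, P a → P b → a = b) :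
    ∑ j, (if P j then c else 0) ≤ c := by
  have hcard : #(univ.filter P) ≤ 1 :=
    card_le_one.2 fun a ha b hb => hP a b (mem_filter.1 ha).2 (mem_filter.1 hb).2
  calc ∑ j, (if P j then c else 0) = #(univ.filter P) • c := by
        rw [← sum_filter, sum_const]
    _ ≤ 1 • c := nsmul_le_nsmul_left hc hcard
    _ = c := one_nsmul c

theorem Matrix.sum_abs_offDiag_lt_abs_diag_of_tridiagonal {n : ℕ} (A : Matrix (Fin n) (Fin n) ℝ)
    (i : Fin n) {d a b : ℝ} (hd : 0 < d) (ha : 0 ≤ a) (hb : 0 ≤ b)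
    (hdiag : A i i = d + a + b)
    (hlower : ∀ j : Fin n, (j : ℕ) + 1 = i → A i j = -a)
    (hupper : ∀ j : Fin n, (i : ℕ) + 1 = j → A i j = -b)
    (hzero : ∀ j : Fin n, (j : ℕ) + 1 ≠ i → (i : ℕ) + 1 ≠ j → j ≠ i → A i j = 0) :
    ∑ j ∈ univ.erase i, |A i j| < |A i i| := by
  have hentry : ∀ j ∈ univ.erase i,
      |A i j| ≤ (if (j : ℕ) + 1 = i then a else 0) + (if (i : ℕ) + 1 = j then b else 0) := by
    intro j hj
    by_cases hlo : (j : ℕ) + 1 = i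
    · have hup : (i : ℕ) + 1 ≠ j := by omega
      simp [hlo, hup, hlower j hlo, abs_of_nonneg ha]
    by_cases hup : (i : ℕ) + 1 = j
    · simp [hlo, hup, hupper j hup, abs_of_nonneg hb]
    · simp [hlo, hup, hzero j hlo hup (ne_of_mem_erase hj)]
  have hnonneg : ∀ j : Fin n,
      0 ≤ (if (j : ℕ) + 1 = i then a else 0) + (if (i : ℕ) + 1 = j then b else 0) := by
    intro j
    split_ifs <;> positivity
  calc ∑ j ∈ univ.erase i, |A i j|
      ≤ ∑ j ∈ univ.erase i,
          ((if (j : ℕ) + 1 = i then a else 0) + (if (i : ℕ) + 1 = j then b else 0)) :=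
        sum_le_sum hentry
    _ ≤ ∑ j : Fin n, ((if (j : ℕ) + 1 = i then a else 0) + (if (i : ℕ) + 1 = j then b else 0)) :=
        sum_le_sum_of_subset_of_nonneg (erase_subset _ _) fun j _ _ => hnonneg j
    _ ≤ a + b := by
        rw [sum_add_distrib]
        exact add_le_add
          (sum_ite_le_of_subsingleton _ ha fun _ _ h₁ h₂ => Fin.ext (by omega))
          (sum_ite_le_of_subsingleton _ hb fun _ _ h₁ h₂ => Fin.ext (by omega))
    _ < |A i i| := by
        rw [hdiag, abs_of_pos (by positivity)]
        linarith

theorem Matrix.isUnit_of_sum_abs_offDiag_lt_abs_diag {n : ℕ} (A : Matrix (Fin n) (Fin n) ℝ)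
    (h : ∀ i, ∑ j ∈ univ.erase i, |A i j| < |A i i|) : IsUnit A :=
  (A.isUnit_iff_isUnit_det).2 <| isUnit_iff_ne_zero.2 <|
    det_ne_zero_of_sum_row_lt_diag <| by simpa only [Real.norm_eq_abs] using h

/-- The system matrix of the semi-implicit scheme for curve evolution is
tridiagonal and strictly diagonally dominant, hence invertible, for every
time step τ > 0. Row i (0-based) corresponds to the unknown grid point i+1. -/
theorem semiImplicit_matrix_invertible
    (n : ℕ) (τ : ℝ) (hτ : 0 < τ) (δ h α : ℕ → ℝ)
    (hδ : ∀ i, 0 < δ i) (hh : ∀ i, 0 < h i)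
    (A : Matrix (Fin n) (Fin n) ℝ)
    (hA : ∀ i j : Fin n,
      A i j =
        if (j : ℕ) = (i : ℕ) then
          (h ((i : ℕ) + 1) + h ((i : ℕ) + 2)) / (2 * τ)
            + δ ((i : ℕ) + 1) / h ((i : ℕ) + 1)
            + δ ((i : ℕ) + 1) / h ((i : ℕ) + 2)
            + max (-(α ((i : ℕ) + 1))) 0 / 2 + max (α ((i : ℕ) + 1)) 0 / 2
        else if (j : ℕ) + 1 = (i : ℕ) then
          -(δ ((i : ℕ) + 1) / h ((i : ℕ) + 1)) - max (-(α ((i : ℕ) + 1))) 0 / 2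
        else if (i : ℕ) + 1 = (j : ℕ) then
          -(δ ((i : ℕ) + 1) / h ((i : ℕ) + 2)) - max (α ((i : ℕ) + 1)) 0 / 2
        else 0) :
    (∀ i j : Fin n, ((i : ℕ) + 1 < (j : ℕ) ∨ (j : ℕ) + 1 < (i : ℕ)) → A i j = 0) ∧
    (∀ i : Fin n, ∑ j ∈ Finset.univ.erase i, |A i j| < |A i i|) ∧
    IsUnit A := by
  have hdom : ∀ i : Fin n, ∑ j ∈ univ.erase i, |A i j| < |A i i| := by
    intro i
    have := hδ (i + 1); have := hh (i + 1); have := hh (i + 2)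
    refine A.sum_abs_offDiag_lt_abs_diag_of_tridiagonal i
      (d := (h (i + 1) + h (i + 2)) / (2 * τ))
      (a := δ (i + 1) / h (i + 1) + max (-α (i + 1)) 0 / 2)
      (b := δ (i + 1) / h (i + 2) + max (α (i + 1)) 0 / 2)
      (by positivity) (by positivity) (by positivity) ?_ ?_ ?_ ?_
    · rw [hA, if_pos rfl]; ring
    · intro j hj
      rw [hA, if_neg (by omega), if_pos hj]; ring
    · intro j hj
      rw [hA, if_neg (by omega), if_neg (by omega), if_pos hj]; ring
    · intro j hlo hup hji
      rw [hA, if_neg (Fin.val_ne_of_ne hji), if_neg hlo, if_neg hup]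
  refine ⟨fun i j hij => ?_, hdom, A.isUnit_of_sum_abs_offDiag_lt_abs_diag hdom⟩
  rw [hA, if_neg (by omega), if_neg (by omega), if_neg (by omega)]
end

section
/- Let x: [0,1]→ℝ² be a regular C² plane curve and define the curvature discretization k_i = sgn(h_{i-1} ∧ h_{i+1}) · (1/(2h_i)) · arccos((h_{i-1}·h_{i+1})/(|h_{i-1}||h_{i+1}|)) on a uniform partition with elements h_i = x(u_i) − x(u_{i-1}) of length h_i. Then as the mesh size tends to 0, k_i converges to the curvature k of the curve at the corresponding point. -/
open scoped RealInnerProductSpace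

noncomputable def perp (v : EuclideanSpace ℝ (Fin 2)) : EuclideanSpace ℝ (Fin 2) :=
  (WithLp.equiv 2 (Fin 2 → ℝ)).symm ![v 1, -(v 0)]

/-- 2D wedge product (determinant) of two plane vectors. -/
def det2 (a b : EuclideanSpace ℝ (Fin 2)) : ℝ := a 0 * b 1 - a 1 * b 0

/-!
Write `a`, `b`, `c` for the chords `x s - x (s - h)`, `x (s + 2h) - x (s + h)`, `x (s + h) - x s`
and `T = x'(s)`, `Q = x''(s)`. Second-order Taylor expansion gives `a = hT - h²Q/2 + o(h²)`,
`b = hT + 3h²Q/2 + o(h²)` and `c = hT + o(h)`, hence `a ∧ b = 2h³ (T ∧ Q) + o(h³) = 2k h³ + o(h³)`,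
while `a · b > 0` for small `h`. When `a · b > 0` the Lagrange identity
`(a · b)² + (a ∧ b)² = (|a||b|)²` turns `sgn (a ∧ b) · arccos (a · b / |a||b|)` into
`arcsin (a ∧ b / |a||b|)`, and since `arcsin y ~ y` at `0` the discrete curvature behaves like
`(a ∧ b) / (2|a||b||c|) → 2k / 2 = k`.
-/

open Filter Topology Asymptotics

theorem Real.sign_mul_arccos_eq_arcsin {c d : ℝ} (hc : 0 ≤ c) (hcd : c ^ 2 + d ^ 2 = 1) :
    Real.sign d * Real.arccos c = Real.arcsin d := by
  have hsqrt : √(1 - c ^ 2) = |d| := by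
    rw [← hcd, add_sub_cancel_left, Real.sqrt_sq_eq_abs]
  rw [Real.arccos_eq_arcsin hc, hsqrt]
  rcases lt_trichotomy d 0 with hd | rfl | hd
  · rw [Real.sign_of_neg hd, abs_of_neg hd, Real.arcsin_neg, neg_one_mul, neg_neg]
  · simp
  · rw [Real.sign_of_pos hd, abs_of_pos hd, one_mul]

theorem Filter.Tendsto.arcsin_div {α : Type*} {l : Filter α} {g w : α → ℝ} {L : ℝ}
    (hg : Tendsto g l (𝓝 0)) (hgw : Tendsto (fun i ↦ g i / w i) l (𝓝 L)) :
    Tendsto (fun i ↦ Real.arcsin (g i) / w i) l (𝓝 L) := by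
  have hslope : Tendsto (fun i ↦ dslope Real.arcsin 0 (g i)) l (𝓝 1) := by
    have hd : HasDerivAt Real.arcsin 1 0 := by
      simpa using Real.hasDerivAt_arcsin (x := 0) (by norm_num) (by norm_num)
    rw [← hd.deriv, ← dslope_same]
    exact ((continuousAt_dslope_same.2 hd.differentiableAt).tendsto).comp hg
  refine (one_mul L ▸ hslope.mul hgw).congr fun i ↦ ?_
  have h := sub_smul_dslope Real.arcsin 0 (g i)
  simp only [sub_zero, Real.arcsin_zero, smul_eq_mul] at h
  rw [← h, mul_comm (g i), mul_div_assoc]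

section Taylor

variable {E : Type*} [NormedAddCommGroup E] [NormedSpace ℝ E]

theorem ContDiff.isLittleO_sub_taylor_two {f : ℝ → E} (hf : ContDiff ℝ 2 f) (s : ℝ) :
    (fun t ↦ f (s + t) - f s - t • deriv f s - (t ^ 2 / 2) • deriv (deriv f) s) =o[𝓝 0]
      fun t ↦ t ^ 2 := by
  have h := (taylor_isLittleO_univ (x₀ := s) (n := 2) hf).comp_tendsto
    ((continuous_const_add s).tendsto' 0 s (add_zero s))
  convert h using 2 with t
  · simp only [taylorWithinEval_succ, taylor_within_zero_eval, iteratedDerivWithin_univ,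
      iteratedDeriv_succ, iteratedDeriv_zero, Function.comp_apply, add_sub_cancel_left]
    module
  · simp

theorem ContDiff.tendsto_chord {f : ℝ → E} (hf : ContDiff ℝ 2 f) (s p q : ℝ) :
    Tendsto (fun h : ℝ ↦ (h ^ 2)⁻¹ • (f (s + q * h) - f (s + p * h) - (h * (q - p)) • deriv f s))
      (𝓝[≠] 0) (𝓝 (((q ^ 2 - p ^ 2) / 2) • deriv (deriv f) s)) := by
  set R := fun t ↦ f (s + t) - f s - t • deriv f s - (t ^ 2 / 2) • deriv (deriv f) s with hR
  have hscaled (c : ℝ) : (fun h ↦ R (c * h)) =o[𝓝 0] fun h ↦ h ^ 2 := by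
    refine ((hf.isLittleO_sub_taylor_two s).comp_tendsto ?_).trans_isBigO ?_
    · simpa using (continuous_const_mul c).tendsto' 0 0 (mul_zero c)
    · simpa [Function.comp_def, mul_pow] using
        (isBigO_refl (fun h : ℝ ↦ h ^ 2) (𝓝 0)).const_mul_left (c ^ 2)
  have hlim := (((hscaled q).sub (hscaled p)).tendsto_inv_smul_nhds_zero.mono_left
    (nhdsWithin_le_nhds (s := {0}ᶜ))).add_const (((q ^ 2 - p ^ 2) / 2) • deriv (deriv f) s)
  rw [zero_add] at hlim
  refine hlim.congr' (eventually_nhdsWithin_of_forall fun h (hh : h ≠ 0) ↦ ?_)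
  simp only [hR]
  match_scalars <;> field_simp <;> ring

theorem tendsto_inv_smul_of_tendsto_inv_sq_smul {v : ℝ → E} {T A : E}
    (hv : Tendsto (fun h ↦ (h ^ 2)⁻¹ • (v h - h • T)) (𝓝[≠] 0) (𝓝 A)) :
    Tendsto (fun h ↦ h⁻¹ • v h) (𝓝[≠] 0) (𝓝 T) := by
  have hlim := (tendsto_nhdsWithin_of_tendsto_nhds tendsto_id).smul hv |>.const_add T
  rw [zero_smul, add_zero] at hlim
  refine hlim.congr' (eventually_nhdsWithin_of_forall fun h (hh : h ≠ 0) ↦ ?_)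
  simp only [id]
  match_scalars <;> field_simp; ring

end Taylor

section Plane

theorem inner_eq_coords (a b : EuclideanSpace ℝ (Fin 2)) : ⟪a, b⟫ = a 0 * b 0 + a 1 * b 1 := by
  simp [PiLp.inner_apply, Fin.sum_univ_two, mul_comm]

theorem norm_sq_eq_coords (a : EuclideanSpace ℝ (Fin 2)) : ‖a‖ ^ 2 = a 0 ^ 2 + a 1 ^ 2 := by
  rw [← real_inner_self_eq_norm_sq, inner_eq_coords]; ring

theorem inner_sq_add_det2_sq (a b : EuclideanSpace ℝ (Fin 2)) :
    ⟪a, b⟫ ^ 2 + det2 a b ^ 2 = (‖a‖ * ‖b‖) ^ 2 := by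
  rw [inner_eq_coords, det2, mul_pow, norm_sq_eq_coords, norm_sq_eq_coords]; ring

theorem det2_self_perp (v : EuclideanSpace ℝ (Fin 2)) : det2 v (perp v) = -‖v‖ ^ 2 := by
  simp only [det2, perp, WithLp.equiv_symm_apply, Matrix.cons_val_zero, Matrix.cons_val_one,
    Matrix.cons_val_fin_one, norm_sq_eq_coords]
  ring

theorem sign_det2_mul_arccos_eq_arcsin {a b : EuclideanSpace ℝ (Fin 2)} (hab : 0 < ⟪a, b⟫) :
    Real.sign (det2 a b) * Real.arccos (⟪a, b⟫ / (‖a‖ * ‖b‖)) =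
      Real.arcsin (det2 a b / (‖a‖ * ‖b‖)) := by
  have hpos : 0 < ‖a‖ * ‖b‖ := hab.trans_le (real_inner_le_norm a b)
  have hsign : Real.sign (det2 a b) = Real.sign (det2 a b / (‖a‖ * ‖b‖)) := by
    rcases lt_trichotomy (det2 a b) 0 with hd | hd | hd
    · rw [Real.sign_of_neg hd, Real.sign_of_neg (div_neg_of_neg_of_pos hd hpos)]
    · rw [hd, zero_div]
    · rw [Real.sign_of_pos hd, Real.sign_of_pos (div_pos hd hpos)]
  rw [hsign]
  refine Real.sign_mul_arccos_eq_arcsin (div_pos hab hpos).le ?_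
  rw [div_pow, div_pow, ← add_div, inner_sq_add_det2_sq, div_self (pow_pos hpos 2).ne']

theorem continuous_det2 :
    Continuous fun p : EuclideanSpace ℝ (Fin 2) × EuclideanSpace ℝ (Fin 2) ↦ det2 p.1 p.2 := by
  unfold det2; fun_prop

theorem Filter.Tendsto.det2 {α : Type*} {l : Filter α} {f g : α → EuclideanSpace ℝ (Fin 2)}
    {a b : EuclideanSpace ℝ (Fin 2)} (hf : Tendsto f l (𝓝 a)) (hg : Tendsto g l (𝓝 b)) :
    Tendsto (fun i ↦ _root_.det2 (f i) (g i)) l (𝓝 (_root_.det2 a b)) :=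
  (continuous_det2.tendsto (a, b)).comp (hf.prodMk_nhds hg)

theorem tendsto_det2_div_pow_three {a b : ℝ → EuclideanSpace ℝ (Fin 2)}
    {T A B : EuclideanSpace ℝ (Fin 2)}
    (ha : Tendsto (fun h ↦ (h ^ 2)⁻¹ • (a h - h • T)) (𝓝[≠] 0) (𝓝 A))
    (hb : Tendsto (fun h ↦ (h ^ 2)⁻¹ • (b h - h • T)) (𝓝[≠] 0) (𝓝 B)) :
    Tendsto (fun h ↦ det2 (a h) (b h) / h ^ 3) (𝓝[≠] 0) (𝓝 (det2 T B + det2 A T)) := by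
  refine ((tendsto_inv_smul_of_tendsto_inv_sq_smul ha).det2 hb |>.add
    (ha.det2 tendsto_const_nhds)).congr' (eventually_nhdsWithin_of_forall fun h (hh : h ≠ 0) ↦ ?_)
  simp only [det2, PiLp.smul_apply, PiLp.sub_apply, smul_eq_mul]
  field_simp
  ring

theorem tendsto_sign_det2_mul_arccos {a b c : ℝ → EuclideanSpace ℝ (Fin 2)}
    {T : EuclideanSpace ℝ (Fin 2)} {κ : ℝ} (hT : ‖T‖ = 1)
    (ha : Tendsto (fun h ↦ h⁻¹ • a h) (𝓝[>] 0) (𝓝 T))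
    (hb : Tendsto (fun h ↦ h⁻¹ • b h) (𝓝[>] 0) (𝓝 T))
    (hc : Tendsto (fun h ↦ h⁻¹ • c h) (𝓝[>] 0) (𝓝 T))
    (hdet : Tendsto (fun h ↦ det2 (a h) (b h) / h ^ 3) (𝓝[>] 0) (𝓝 (2 * κ))) :
    Tendsto (fun h ↦ Real.sign (det2 (a h) (b h)) * (1 / (2 * ‖c h‖)) *
      Real.arccos (⟪a h, b h⟫ / (‖a h‖ * ‖b h‖))) (𝓝[>] 0) (𝓝 κ) := by
  have hpos : ∀ᶠ h in 𝓝[>] (0 : ℝ), 0 < h := self_mem_nhdsWithin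
  have hinner : ∀ᶠ h in 𝓝[>] (0 : ℝ), 0 < ⟪a h, b h⟫ := by
    have hlim := ha.inner (𝕜 := ℝ) hb
    rw [real_inner_self_eq_norm_sq, hT, one_pow] at hlim
    filter_upwards [hlim.eventually (eventually_gt_nhds one_pos), hpos] with h hh h0
    rw [real_inner_smul_left, real_inner_smul_right] at hh
    exact (mul_pos_iff_of_pos_left (inv_pos.2 h0)).1
      ((mul_pos_iff_of_pos_left (inv_pos.2 h0)).1 hh)
  have hnorm {u : ℝ → EuclideanSpace ℝ (Fin 2)}
      (hu : Tendsto (fun h ↦ h⁻¹ • u h) (𝓝[>] 0) (𝓝 T)) :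
      Tendsto (fun h ↦ h⁻¹ * ‖u h‖) (𝓝[>] 0) (𝓝 1) := by
    refine hT ▸ hu.norm.congr' ?_
    filter_upwards [hpos] with h h0
    rw [norm_smul, norm_inv, Real.norm_of_nonneg h0.le]
  have hG : Tendsto (fun h ↦ det2 (a h) (b h) / (‖a h‖ * ‖b h‖)) (𝓝[>] 0) (𝓝 0) := by
    have hlim := (hdet.mul (tendsto_nhdsWithin_of_tendsto_nhds tendsto_id)).div
      ((hnorm ha).mul (hnorm hb)) (by norm_num)
    rw [mul_zero, zero_div] at hlim
    refine hlim.congr' ?_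
    filter_upwards [hpos] with h h0
    simp only [Pi.div_apply, id]
    field_simp
  have hGc : Tendsto (fun h ↦ det2 (a h) (b h) / (‖a h‖ * ‖b h‖) / (2 * ‖c h‖)) (𝓝[>] 0)
      (𝓝 κ) := by
    have hlim := hdet.div (((hnorm ha).mul (hnorm hb)).mul ((hnorm hc).const_mul 2))
      (by norm_num)
    rw [show 2 * κ / (1 * 1 * (2 * 1)) = κ by ring] at hlim
    refine hlim.congr' ?_
    filter_upwards [hpos] with h h0
    simp only [Pi.div_apply]
    field_simp
  refine (hG.arcsin_div hGc).congr' ?_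
  filter_upwards [hinner] with h hh
  rw [mul_comm (Real.sign _), mul_assoc, sign_det2_mul_arccos_eq_arcsin hh, one_div_mul_eq_div]

end Plane

/-- Consistency of the curvature discretization
k_i = sgn(h_{i-1} ∧ h_{i+1}) (1/(2h_i)) arccos(h_{i-1}·h_{i+1}/(|h_{i-1}||h_{i+1}|)):
for a C², arclength-parametrized plane curve it converges, as the mesh size
tends to 0, to the curvature at the corresponding point. -/
theorem curvature_discretization_consistency
    (x : ℝ → EuclideanSpace ℝ (Fin 2)) (k : ℝ → ℝ)
    (hx : ContDiff ℝ 2 x)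
    (harc : ∀ t, ‖deriv x t‖ = 1)
    (hk : ∀ t, deriv (deriv x) t = (-(k t)) • perp (deriv x t))
    (s : ℝ) :
    Filter.Tendsto
      (fun h : ℝ =>
        Real.sign (det2 (x s - x (s - h)) (x (s + 2 * h) - x (s + h))) *
          (1 / (2 * ‖x (s + h) - x s‖)) *
          Real.arccos (⟪x s - x (s - h), x (s + 2 * h) - x (s + h)⟫ /
            (‖x s - x (s - h)‖ * ‖x (s + 2 * h) - x (s + h)‖)))
      (nhdsWithin 0 (Set.Ioi 0)) (nhds (k s)) := by
  have hA := hx.tendsto_chord s (-1) 0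
  have hB := hx.tendsto_chord s 1 2
  have hC := hx.tendsto_chord s 0 1
  norm_num [← sub_eq_add_neg] at hA hB hC
  have hdet : det2 (deriv x s) ((3 / 2 : ℝ) • deriv (deriv x) s) +
      det2 (-((1 / 2 : ℝ) • deriv (deriv x) s)) (deriv x s) = 2 * k s := by
    have h := det2_self_perp (deriv x s)
    simp only [hk, det2, PiLp.smul_apply, PiLp.neg_apply, smul_eq_mul, harc] at h ⊢
    linear_combination (-2 * k s) * h
  have hGT := nhdsGT_le_nhdsNE (0 : ℝ)
  exact tendsto_sign_det2_mul_arccos (harc s)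
    ((tendsto_inv_smul_of_tendsto_inv_sq_smul hA).mono_left hGT)
    ((tendsto_inv_smul_of_tendsto_inv_sq_smul hB).mono_left hGT)
    ((tendsto_inv_smul_of_tendsto_inv_sq_smul hC).mono_left hGT)
    (hdet ▸ (tendsto_det2_div_pow_three hA hB).mono_left hGT)
end
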